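/- arXiv:1506.04779 — 4 statements merged into one kernel-verified Lean document; each statement's English description precedes it below -/
import Mathlib

section
/- Let D be a normalized dictionary in a Hilbert space H satisfying RIP(2n) with constant δ_{2n} < 1. Then the set Σ_n of all linear combinations of at most n dictionary elements is closed in H. -/
open scoped RealInnerProductSpace BigOperators

/-- The synthesis operator of a dictionary: `Φ c = ∑ γ c_γ φ_γ`. -/
noncomputable def dictSum {Γ H : Type*} [NormedAddCommGroup H] [InnerProductSpace ℝ H]
    (φ : Γ → H) (c : Γ →₀ ℝ) : H :=
  c.sum fun γ a => a • φ γ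

/-- The squared ℓ² norm of a finitely supported sequence. -/
noncomputable def l2normSq {Γ : Type*} (c : Γ →₀ ℝ) : ℝ :=
  ∑ γ ∈ c.support, (c γ) ^ 2

/-- The restricted isometry property of order `m` with constant `δ`. -/
def RIP {Γ H : Type*} [NormedAddCommGroup H] [InnerProductSpace ℝ H]
    (φ : Γ → H) (m : ℕ) (δ : ℝ) : Prop :=
  ∀ c : Γ →₀ ℝ, c.support.card ≤ m →
    (1 - δ) * l2normSq c ≤ ‖dictSum φ c‖ ^ 2 ∧
    ‖dictSum φ c‖ ^ 2 ≤ (1 + δ) * l2normSq c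

/-- The set `Σ_n` of `n`-term linear combinations from the dictionary. -/
def SigmaN {Γ H : Type*} [NormedAddCommGroup H] [InnerProductSpace ℝ H]
    (φ : Γ → H) (n : ℕ) : Set H :=
  {g | ∃ c : Γ →₀ ℝ, c.support.card ≤ n ∧ dictSum φ c = g}

/-!
The lower RIP bound applies to differences of two `n`-term combinations, which are `2n`-sparse,
so a convergent sequence in `Σ_n` has coefficient sequences that are Cauchy in `ℓ²`, hence
converge coordinatewise. A coordinatewise limit of `n`-sparse sequences is `n`-sparse, and by a
Fatou-type argument the coefficients also converge to it in `ℓ²`. The upper RIP bound then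
shows that the synthesized vectors converge to the synthesis of the limit, which lies in `Σ_n`.
-/

open Filter Topology

section Coefficients

variable {Γ : Type*}

lemma l2normSq_nonneg (c : Γ →₀ ℝ) : 0 ≤ l2normSq c :=
  Finset.sum_nonneg fun _ _ => sq_nonneg _

lemma sum_sq_le_l2normSq (c : Γ →₀ ℝ) (s : Finset Γ) :
    ∑ γ ∈ s, c γ ^ 2 ≤ l2normSq c := by
  classical
  calc ∑ γ ∈ s, c γ ^ 2 ≤ ∑ γ ∈ s ∪ c.support, c γ ^ 2 :=
        Finset.sum_le_sum_of_subset_of_nonneg Finset.subset_union_left fun _ _ _ => sq_nonneg _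
    _ = l2normSq c := by
        refine (Finset.sum_subset Finset.subset_union_right fun γ _ hγ => ?_).symm
        simp [Finsupp.notMem_support_iff.mp hγ]

lemma sq_apply_le_l2normSq (c : Γ →₀ ℝ) (γ : Γ) : c γ ^ 2 ≤ l2normSq c := by
  simpa using sum_sq_le_l2normSq c {γ}

lemma card_support_sub_le (c d : Γ →₀ ℝ) :
    (c - d).support.card ≤ c.support.card + d.support.card := by
  classical
  exact (Finset.card_le_card Finsupp.support_sub).trans (Finset.card_union_le _ _)

variable {ι : Type*}

lemma cauchySeq_apply_of_tendsto_l2normSq [SemilatticeSup ι] [Nonempty ι]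
    {c : ι → Γ →₀ ℝ}
    (hc : Tendsto (fun p : ι × ι => l2normSq (c p.1 - c p.2)) atTop (𝓝 0)) (γ : Γ) :
    CauchySeq fun k => c k γ := by
  refine cauchySeq_iff_tendsto_dist_atTop_0.2 (squeeze_zero (fun _ => dist_nonneg) (fun p => ?_)
    (by simpa using hc.sqrt))
  rw [Real.dist_eq, ← Real.sqrt_sq_eq_abs, ← Finsupp.sub_apply]
  exact Real.sqrt_le_sqrt (sq_apply_le_l2normSq _ γ)

lemma l2normSq_sub_le_of_tendsto_apply {l : Filter ι} [l.NeBot] {c : ι → Γ →₀ ℝ}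
    {a d : Γ →₀ ℝ} {ε : ℝ} (ha : ∀ γ, Tendsto (fun j => c j γ) l (𝓝 (a γ)))
    (hε : ∀ᶠ j in l, l2normSq (d - c j) ≤ ε) : l2normSq (d - a) ≤ ε := by
  have hlim : Tendsto (fun j => ∑ γ ∈ (d - a).support, (d - c j) γ ^ 2) l
      (𝓝 (l2normSq (d - a))) :=
    tendsto_finsetSum _ fun γ _ => by
      simpa only [Finsupp.sub_apply] using (tendsto_const_nhds.sub (ha γ)).pow 2
  exact le_of_tendsto hlim (hε.mono fun j hj => (sum_sq_le_l2normSq _ _).trans hj)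

lemma tendsto_l2normSq_sub_of_tendsto_apply [Preorder ι] [(atTop : Filter ι).NeBot]
    {c : ι → Γ →₀ ℝ} {a : Γ →₀ ℝ}
    (hc : Tendsto (fun p : ι × ι => l2normSq (c p.1 - c p.2)) atTop (𝓝 0))
    (ha : ∀ γ, Tendsto (fun j => c j γ) atTop (𝓝 (a γ))) :
    Tendsto (fun k => l2normSq (c k - a)) atTop (𝓝 0) := by
  refine tendsto_order.2 ⟨fun b hb => .of_forall fun k => hb.trans_le (l2normSq_nonneg _),
    fun ε hε => ?_⟩
  have hsmall : ∀ᶠ p : ι × ι in atTop ×ˢ atTop, l2normSq (c p.1 - c p.2) < ε / 2 := by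
    rw [prod_atTop_atTop_eq]
    exact (tendsto_order.1 hc).2 _ (half_pos hε)
  filter_upwards [hsmall.curry] with k hk
  exact (l2normSq_sub_le_of_tendsto_apply ha (hk.mono fun _ => le_of_lt)).trans_lt
    (half_lt_self hε)

lemma exists_finsupp_of_tendsto_apply {l : Filter ι} [l.NeBot] {c : ι → Γ →₀ ℝ} {n : ℕ}
    (hc : ∀ k, (c k).support.card ≤ n) {f : Γ → ℝ}
    (hf : ∀ γ, Tendsto (fun k => c k γ) l (𝓝 (f γ))) :
    ∃ a : Γ →₀ ℝ, a.support.card ≤ n ∧ ⇑a = f := by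
  have hcard : ∀ t : Finset Γ, (∀ γ ∈ t, f γ ≠ 0) → t.card ≤ n := fun t ht => by
    obtain ⟨k, hk⟩ := ((eventually_all_finset t).2 fun γ hγ =>
      (hf γ).eventually (isOpen_ne.mem_nhds (ht γ hγ))).exists
    exact (Finset.card_le_card fun γ hγ => Finsupp.mem_support_iff.2 (hk γ hγ)).trans (hc k)
  have hfin : (Function.support f).Finite := by
    by_contra hinf
    obtain ⟨t, hts, htcard⟩ := Set.Infinite.exists_subset_card_eq hinf (n + 1)
    have := hcard t fun γ hγ => hts hγ
    omega
  refine ⟨Finsupp.ofSupportFinite f hfin, hcard _ fun γ hγ => ?_, Finsupp.ofSupportFinite_coe⟩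
  simpa [Finsupp.ofSupportFinite_coe] using hγ

end Coefficients

section Dictionary

variable {Γ H : Type*} [NormedAddCommGroup H] [InnerProductSpace ℝ H] {φ : Γ → H}

lemma dictSum_sub (φ : Γ → H) (c d : Γ →₀ ℝ) :
    dictSum φ (c - d) = dictSum φ c - dictSum φ d :=
  map_sub (Finsupp.linearCombination ℝ φ) c d

variable {m : ℕ} {δ : ℝ} {ι : Type*}

lemma RIP.tendsto_l2normSq_sub_of_cauchySeq [SemilatticeSup ι] [Nonempty ι]
    (hRIP : RIP φ m δ) (hδ : δ < 1) {c : ι → Γ →₀ ℝ}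
    (hsparse : ∀ k j, (c k - c j).support.card ≤ m) (hx : CauchySeq fun k => dictSum φ (c k)) :
    Tendsto (fun p : ι × ι => l2normSq (c p.1 - c p.2)) atTop (𝓝 0) := by
  have hpos : 0 < 1 - δ := sub_pos.2 hδ
  refine squeeze_zero (fun _ => l2normSq_nonneg _) (fun p => ?_)
    (by simpa using ((cauchySeq_iff_tendsto_dist_atTop_0.1 hx).pow 2).div_const (1 - δ))
  rw [le_div_iff₀' hpos, dist_eq_norm, ← dictSum_sub]
  exact (hRIP _ (hsparse p.1 p.2)).1

lemma RIP.tendsto_dictSum (hRIP : RIP φ m δ) {l : Filter ι} {c : ι → Γ →₀ ℝ}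
    {a : Γ →₀ ℝ}
    (hsparse : ∀ k, (c k - a).support.card ≤ m)
    (hc : Tendsto (fun k => l2normSq (c k - a)) l (𝓝 0)) :
    Tendsto (fun k => dictSum φ (c k)) l (𝓝 (dictSum φ a)) := by
  refine tendsto_iff_norm_sub_tendsto_zero.2 (squeeze_zero (fun _ => norm_nonneg _) (fun k => ?_)
    (by simpa using (hc.const_mul (1 + δ)).sqrt))
  rw [← dictSum_sub, ← Real.sqrt_sq (norm_nonneg _)]
  exact Real.sqrt_le_sqrt (hRIP _ (hsparse k)).2

end Dictionary

theorem stmt1_SigmaN_closed_general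
    {Γ H : Type*} [NormedAddCommGroup H] [InnerProductSpace ℝ H]
    (φ : Γ → H)
    (n : ℕ) (δ : ℝ) (hδ : δ < 1) (hRIP : RIP φ (2 * n) δ) :
    IsClosed (SigmaN φ n) := by
  refine isSeqClosed_iff_isClosed.1 fun x g hx hg => ?_
  choose c hcard hcx using hx
  obtain rfl : x = fun k => dictSum φ (c k) := funext fun k => (hcx k).symm
  have hsparse (d : Γ →₀ ℝ) (hd : d.support.card ≤ n) (k : ℕ) :
      (c k - d).support.card ≤ 2 * n := by
    have := card_support_sub_le (c k) d
    have := hcard k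
    omega
  have hl2 := hRIP.tendsto_l2normSq_sub_of_cauchySeq hδ (fun k j => hsparse _ (hcard j) k)
    hg.cauchySeq
  choose f hf using fun γ =>
    cauchySeq_tendsto_of_complete (cauchySeq_apply_of_tendsto_l2normSq hl2 γ)
  obtain ⟨a, ha_card, rfl⟩ := exists_finsupp_of_tendsto_apply hcard hf
  exact ⟨a, ha_card, tendsto_nhds_unique
    (hRIP.tendsto_dictSum (hsparse a ha_card) (tendsto_l2normSq_sub_of_tendsto_apply hl2 hf)) hg⟩

/-- If the dictionary satisfies RIP(2n) with constant `δ < 1`, then `Σ_n` is closed. -/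
theorem stmt1_SigmaN_closed
    {Γ H : Type*} [Countable Γ] [NormedAddCommGroup H] [InnerProductSpace ℝ H]
    [CompleteSpace H]
    (φ : Γ → H) (hnorm : ∀ γ, ‖φ γ‖ = 1)
    (n : ℕ) (δ : ℝ) (hδ : δ < 1) (hRIP : RIP φ (2 * n) δ) :
    IsClosed (SigmaN φ n) :=
  stmt1_SigmaN_closed_general φ n δ hδ hRIP
end

section
/- Under the hypotheses of the WOMP residual reduction lemma, for the selected index γ_{k+1} one has the key estimate |⟨g, r_k⟩| ≤ κ^{-1} √(#(T\S_k)) · ‖z − c^k‖_{ℓ²} · |⟨r_k, φ_{γ_{k+1}}⟩|, where f_k = Φc^k with c^k supported on S_k. -/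
open scoped RealInnerProductSpace BigOperators

/-- The ℓ² norm of a finitely supported sequence. -/
noncomputable def l2norm {Γ : Type*} (c : Γ →₀ ℝ) : ℝ :=
  Real.sqrt (∑ γ ∈ c.support, (c γ) ^ 2)

/-!
The residual is orthogonal to the atoms indexed by `S_k`, so `⟪Φz, r_k⟫` only involves the
coefficients `z_γ` with `γ ∈ T \ S_k`, where `z` agrees with `z - c^k`. Each correlation
`|⟪φ_γ, r_k⟫|` is at most `κ⁻¹ |⟪r_k, φ_{γ_{k+1}}⟫|` by the weak greedy rule, and the remaining
`ℓ¹` norm over `T \ S_k` is bounded by Cauchy–Schwarz.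
-/

open Finset

theorem abs_sum_mul_le_sum_abs_mul {ι : Type*} (s : Finset ι) (a b : ι → ℝ) {M : ℝ}
    (hb : ∀ i ∈ s, |b i| ≤ M) : |∑ i ∈ s, a i * b i| ≤ (∑ i ∈ s, |a i|) * M := by
  calc |∑ i ∈ s, a i * b i| ≤ ∑ i ∈ s, |a i| * |b i| := by
        simpa only [abs_mul] using abs_sum_le_sum_abs (fun i => a i * b i) s
    _ ≤ ∑ i ∈ s, |a i| * M := sum_le_sum fun i hi => by gcongr; exact hb i hi
    _ = (∑ i ∈ s, |a i|) * M := (sum_mul ..).symm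

section L2

variable {Γ : Type*}

theorem sqrt_sum_sq_le_l2norm (c : Γ →₀ ℝ) (s : Finset Γ) :
    √(∑ γ ∈ s, c γ ^ 2) ≤ l2norm c := by
  classical
  have hsupp : ∑ γ ∈ s ∪ c.support, c γ ^ 2 = ∑ γ ∈ c.support, c γ ^ 2 :=
    (sum_subset subset_union_right fun γ _ hγ => by
      rw [Finsupp.notMem_support_iff.mp hγ, sq, mul_zero]).symm
  refine Real.sqrt_le_sqrt ?_
  rw [← hsupp]
  exact sum_le_sum_of_subset_of_nonneg subset_union_left fun γ _ _ => sq_nonneg _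

theorem sum_abs_le_sqrt_card_mul_l2norm (c : Γ →₀ ℝ) (s : Finset Γ) :
    ∑ γ ∈ s, |c γ| ≤ √(#s : ℝ) * l2norm c := by
  calc ∑ γ ∈ s, |c γ| = ∑ γ ∈ s, 1 * |c γ| := by simp only [one_mul]
    _ ≤ √(∑ γ ∈ s, (1 : ℝ) ^ 2) * √(∑ γ ∈ s, |c γ| ^ 2) :=
        Real.sum_mul_le_sqrt_mul_sqrt s _ _
    _ = √(#s : ℝ) * √(∑ γ ∈ s, c γ ^ 2) := by simp only [one_pow, sum_const, nsmul_one, sq_abs]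
    _ ≤ √(#s : ℝ) * l2norm c := by gcongr; exact sqrt_sum_sq_le_l2norm c s

end L2

section Dictionary

variable {Γ H : Type*} [NormedAddCommGroup H] [InnerProductSpace ℝ H]

theorem inner_dictSum_left_eq_sum (φ : Γ → H) {c : Γ →₀ ℝ} {s : Finset Γ}
    (hc : c.support ⊆ s) (r : H) : ⟪dictSum φ c, r⟫ = ∑ γ ∈ s, c γ * ⟪φ γ, r⟫ := by
  rw [dictSum, Finsupp.sum_of_support_subset c hc _ fun γ _ => zero_smul ℝ (φ γ), sum_inner]
  simp only [real_inner_smul_left]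

theorem inner_dictSum_left_eq_sum_sdiff [DecidableEq Γ] (φ : Γ → H) {c : Γ →₀ ℝ}
    {T S : Finset Γ} (hc : c.support ⊆ T) {r : H} (horth : ∀ γ ∈ S, ⟪φ γ, r⟫ = 0) :
    ⟪dictSum φ c, r⟫ = ∑ γ ∈ T \ S, c γ * ⟪φ γ, r⟫ := by
  rw [inner_dictSum_left_eq_sum φ hc r]
  refine (sum_subset sdiff_subset fun γ hT hγ => ?_).symm
  rw [horth γ (by simpa [hT] using hγ), mul_zero]

end Dictionary

theorem stmt6_inner_product_estimate_general
    {Γ H : Type*} [DecidableEq Γ]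
    [NormedAddCommGroup H] [InnerProductSpace ℝ H]
    (φ : Γ → H)
    (κ : ℝ) (hκ : 0 < κ)
    (Sk : Finset Γ)
    (ck : Γ →₀ ℝ) (hck : ck.support ⊆ Sk)
    (rk : H)
    (horth : ∀ γ ∈ Sk, ⟪rk, φ γ⟫ = 0)
    (γsel : Γ) (hselect : ∀ γ' : Γ, κ * |⟪rk, φ γ'⟫| ≤ |⟪rk, φ γsel⟫|)
    (z : Γ →₀ ℝ) (T : Finset Γ) (hzT : z.support ⊆ T)
    (g : H) (hg : g = dictSum φ z) :
    |⟪g, rk⟫| ≤ κ⁻¹ * Real.sqrt ((T \ Sk).card) * l2norm (z - ck) * |⟪rk, φ γsel⟫| := by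
  have hz : ∀ γ ∈ T \ Sk, z γ = (z - ck) γ := fun γ hγ => by
    rw [Finsupp.sub_apply, Finsupp.notMem_support_iff.mp fun h => (mem_sdiff.mp hγ).2 (hck h),
      sub_zero]
  have hsel : ∀ γ ∈ T \ Sk, |⟪φ γ, rk⟫| ≤ κ⁻¹ * |⟪rk, φ γsel⟫| := fun γ _ => by
    rw [real_inner_comm, le_inv_mul_iff₀ hκ]
    exact hselect γ
  calc |⟪g, rk⟫| = |∑ γ ∈ T \ Sk, (z - ck) γ * ⟪φ γ, rk⟫| := by
        rw [hg, inner_dictSum_left_eq_sum_sdiff φ hzT fun γ hγ => by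
          rw [real_inner_comm]; exact horth γ hγ]
        exact congrArg abs (sum_congr rfl fun γ hγ => by rw [hz γ hγ])
    _ ≤ (∑ γ ∈ T \ Sk, |(z - ck) γ|) * (κ⁻¹ * |⟪rk, φ γsel⟫|) :=
        abs_sum_mul_le_sum_abs_mul _ _ _ hsel
    _ ≤ (√((T \ Sk).card : ℝ) * l2norm (z - ck)) * (κ⁻¹ * |⟪rk, φ γsel⟫|) := by
        gcongr
        exact sum_abs_le_sqrt_card_mul_l2norm _ _
    _ = κ⁻¹ * Real.sqrt ((T \ Sk).card) * l2norm (z - ck) * |⟪rk, φ γsel⟫| := by ring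

/-- The key estimate on `⟪g, r_k⟫` in the proof of the WOMP residual-reduction lemma:
`|⟪g, r_k⟫| ≤ κ⁻¹ √(#(T \ S_k)) ‖z − c^k‖_{ℓ²} |⟪r_k, φ_{γ_{k+1}}⟫|`,
where `g = Φz` with `z` supported on `T`, `f_k = Φc^k` with `c^k` supported on `S_k`,
the residual `r_k = f − f_k` is orthogonal to `span{φ_γ : γ ∈ S_k}`, and `γsel` is the
index selected by the weak greedy rule. -/
theorem stmt6_inner_product_estimate
    {Γ H : Type*} [Countable Γ] [DecidableEq Γ]
    [NormedAddCommGroup H] [InnerProductSpace ℝ H] [CompleteSpace H]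
    (φ : Γ → H) (hnorm : ∀ γ, ‖φ γ‖ = 1)
    (κ : ℝ) (hκ : 0 < κ) (hκ1 : κ ≤ 1)
    (f : H) (Sk : Finset Γ)
    (ck : Γ →₀ ℝ) (hck : ck.support ⊆ Sk)
    (fk : H) (hfk : fk = dictSum φ ck)
    (rk : H) (hrk : rk = f - fk)
    (horth : ∀ γ ∈ Sk, ⟪rk, φ γ⟫ = 0)
    (γsel : Γ) (hselect : ∀ γ' : Γ, κ * |⟪rk, φ γ'⟫| ≤ |⟪rk, φ γsel⟫|)
    (z : Γ →₀ ℝ) (T : Finset Γ) (hzT : z.support ⊆ T)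
    (g : H) (hg : g = dictSum φ z) :
    |⟪g, rk⟫| ≤ κ⁻¹ * Real.sqrt ((T \ Sk).card) * l2norm (z - ck) * |⟪rk, φ γsel⟫| :=
  stmt6_inner_product_estimate_general φ κ hκ Sk ck hck rk horth γsel hselect z T hzT g hg
end

section
/- Let D be a normalized dictionary in a Hilbert space H satisfying RIP((A+1)n) with constant δ_{(A+1)n} ≤ δ* < 1. Let f ∈ H and let (r_k) be the residuals of WOMP with weakness parameter κ applied to f. If g = Φz where z is supported on a set T with #T ≤ n, and j, m, L are nonnegative integers with #(T\S_j) ≤ m and j + mL ≤ An, then ‖r_{j+mL}‖² ≤ e^{−κ²(1−δ*)L} ‖r_j‖² + ‖f − g‖². -/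
open scoped RealInnerProductSpace BigOperators

/-!
Let `e = ‖f - g‖²` and let `Φ c_l = f - r_l` be the WOMP approximant after `l` steps. Then
`d = z - c_l` satisfies `Φ d = r_l - (f - g)` and is supported in `T ∪ S_l`, which has at most
`(A + 1) n` atoms. As `r_l ⊥ φ_γ` for `γ ∈ S_l`, the correlation `⟪r_l, Φ d⟫` only involves the at
most `m` atoms of `T \ S_l`, so weak greediness, Cauchy–Schwarz and the lower RIP bound give
`κ² (1 - δ*) (‖r_l‖² - e) ≤ m ⟪r_l, φ_{γ_l}⟫²`; the factor `‖Φ d‖²` cancels thanks to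
`(‖x‖² - ‖y‖²) ‖x - y‖² ≤ ⟪x, x - y⟫²`. Since `‖r_{l+1}‖² ≤ ‖r_l‖² - ⟪r_l, φ_{γ_l}⟫²`, the excess
`max 0 (‖r_l‖² - e)` shrinks by the factor `exp (-κ² (1 - δ*) / m)` at each of the `m L` steps.
-/

open Finset

theorem max_zero_sub_le_exp_mul {a a' e t : ℝ} (h : a' ≤ a - max 0 (t * (a - e))) :
    max 0 (a' - e) ≤ Real.exp (-t) * max 0 (a - e) := by
  rcases le_or_gt a e with hae | hae
  · rw [max_eq_left (by linarith [le_max_left 0 (t * (a - e))]), max_eq_left (by linarith),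
      mul_zero]
  · have hexp : 1 - t ≤ Real.exp (-t) := by linarith [Real.add_one_le_exp (-t)]
    rw [max_eq_right (sub_nonneg.2 hae.le)]
    refine max_le (by positivity) ?_
    nlinarith [le_max_right 0 (t * (a - e))]

theorem le_exp_mul_add_of_forall_lt {a : ℕ → ℝ} {e t : ℝ} {N : ℕ} (h0 : 0 ≤ a 0) (he : 0 ≤ e)
    (h : ∀ k < N, a (k + 1) ≤ a k - max 0 (t * (a k - e))) :
    a N ≤ Real.exp (-(t * N)) * a 0 + e := by
  have hiter : ∀ k ≤ N, max 0 (a k - e) ≤ Real.exp (-(t * k)) * max 0 (a 0 - e) := by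
    intro k hk
    induction k with
    | zero => simp
    | succ k ih =>
      calc max 0 (a (k + 1) - e) ≤ Real.exp (-t) * max 0 (a k - e) :=
            max_zero_sub_le_exp_mul (h k hk)
        _ ≤ Real.exp (-t) * (Real.exp (-(t * k)) * max 0 (a 0 - e)) := by
            gcongr; exact ih (by omega)
        _ = Real.exp (-(t * ↑(k + 1))) * max 0 (a 0 - e) := by
            rw [← mul_assoc, ← Real.exp_add]; push_cast; ring_nf
  calc a N ≤ max 0 (a N - e) + e := by linarith [le_max_right 0 (a N - e)]
    _ ≤ Real.exp (-(t * N)) * max 0 (a 0 - e) + e := by gcongr; exact hiter N le_rfl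
    _ ≤ Real.exp (-(t * N)) * a 0 + e := by gcongr; exact max_le h0 (by linarith)

section InnerProductSpace

variable {H : Type*} [NormedAddCommGroup H] [InnerProductSpace ℝ H]

theorem norm_sq_sub_mul_norm_sub_sq_le (x y : H) :
    (‖x‖ ^ 2 - ‖y‖ ^ 2) * ‖x - y‖ ^ 2 ≤ ⟪x, x - y⟫ ^ 2 := by
  rw [norm_sub_sq_real, inner_sub_right, real_inner_self_eq_norm_sq]
  nlinarith [sq_nonneg (⟪x, y⟫ - ‖y‖ ^ 2)]

theorem norm_sq_le_norm_sub_sq_of_orthogonal {K : Submodule ℝ H} {f r v : H} (hmem : f - r ∈ K)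
    (horth : ∀ w ∈ K, ⟪r, w⟫ = 0) (hv : v ∈ K) : ‖r‖ ^ 2 ≤ ‖f - v‖ ^ 2 := by
  have hpyth := norm_add_sq_eq_norm_sq_add_norm_sq_real (horth _ (K.sub_mem hmem hv))
  rw [show r + (f - r - v) = f - v by abel] at hpyth
  nlinarith [mul_self_nonneg ‖f - r - v‖]

variable {Γ : Type*} {φ : Γ → H}

theorem inner_dictSum (x : H) (c : Γ →₀ ℝ) :
    ⟪x, dictSum φ c⟫ = ∑ γ ∈ c.support, c γ * ⟪x, φ γ⟫ := by
  simp only [dictSum, Finsupp.sum, inner_sum, real_inner_smul_right]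

theorem dictSum_eq_linearCombination (c : Γ →₀ ℝ) :
    dictSum φ c = Finsupp.linearCombination ℝ φ c := rfl

theorem sq_mul_inner_dictSum_le [DecidableEq Γ] {S U : Finset Γ} {x : H} {κ s : ℝ} {d : Γ →₀ ℝ}
    (hxS : ∀ γ ∈ S, ⟪x, φ γ⟫ = 0) (hdU : d.support \ S ⊆ U) (hκ : 0 ≤ κ)
    (hsel : ∀ γ, κ * |⟪x, φ γ⟫| ≤ |s|) :
    (κ * ⟪x, dictSum φ d⟫) ^ 2 ≤ #U * s ^ 2 * l2normSq d := by
  set W := d.support \ S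
  have hsum : ⟪x, dictSum φ d⟫ = ∑ γ ∈ W, d γ * ⟪x, φ γ⟫ := by
    rw [inner_dictSum]
    refine (sum_subset sdiff_subset fun γ hγ hγW => ?_).symm
    rw [hxS γ (by simp_all [W]), mul_zero]
  have hbound : |κ * ⟪x, dictSum φ d⟫| ≤ |s| * ∑ γ ∈ W, |d γ| := by
    rw [hsum, mul_sum, mul_sum]
    refine (abs_sum_le_sum_abs _ _).trans (sum_le_sum fun γ _ => ?_)
    rw [abs_mul, abs_mul, abs_of_nonneg hκ, mul_left_comm, mul_comm |s|]
    exact mul_le_mul_of_nonneg_left (hsel γ) (abs_nonneg _)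
  have hW : ∑ γ ∈ W, d γ ^ 2 ≤ l2normSq d :=
    sum_le_sum_of_subset_of_nonneg sdiff_subset fun γ _ _ => sq_nonneg _
  calc (κ * ⟪x, dictSum φ d⟫) ^ 2 ≤ (|s| * ∑ γ ∈ W, |d γ|) ^ 2 := by
        rw [← sq_abs]; gcongr
    _ ≤ s ^ 2 * (#W * ∑ γ ∈ W, d γ ^ 2) := by
        rw [mul_pow, sq_abs]
        gcongr
        simpa only [sq_abs] using sq_sum_le_card_mul_sum_sq (s := W) (f := fun γ => |d γ|)
    _ ≤ #U * s ^ 2 * l2normSq d := by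
        rw [mul_left_comm, ← mul_assoc]; gcongr

theorem sq_mul_norm_sq_sub_le_of_dictSum_eq [DecidableEq Γ] {S U : Finset Γ} {x y : H}
    {κ δ s : ℝ} {d : Γ →₀ ℝ}
    (hd : dictSum φ d = x - y) (hxS : ∀ γ ∈ S, ⟪x, φ γ⟫ = 0) (hdU : d.support \ S ⊆ U)
    (hκ : 0 ≤ κ) (hsel : ∀ γ, κ * |⟪x, φ γ⟫| ≤ |s|) (hδ : δ ≤ 1)
    (hRIP : (1 - δ) * l2normSq d ≤ ‖dictSum φ d‖ ^ 2) :
    κ ^ 2 * (1 - δ) * (‖x‖ ^ 2 - ‖y‖ ^ 2) ≤ #U * s ^ 2 := by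
  rcases eq_or_ne x y with rfl | hxy
  · simp only [sub_self, mul_zero]; positivity
  have hpos : 0 < ‖dictSum φ d‖ ^ 2 := by
    rw [hd]; exact pow_pos (norm_pos_iff.2 (sub_ne_zero.2 hxy)) 2
  have h1δ : 0 ≤ 1 - δ := by linarith
  refine le_of_mul_le_mul_right ?_ hpos
  calc κ ^ 2 * (1 - δ) * (‖x‖ ^ 2 - ‖y‖ ^ 2) * ‖dictSum φ d‖ ^ 2
      ≤ (1 - δ) * (κ * ⟪x, dictSum φ d⟫) ^ 2 := by
        rw [hd, mul_pow, mul_assoc, mul_assoc, mul_left_comm]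
        gcongr
        exact norm_sq_sub_mul_norm_sub_sq_le x y
    _ ≤ (1 - δ) * (#U * s ^ 2 * l2normSq d) := by
        gcongr
        exact sq_mul_inner_dictSum_le hxS hdU hκ hsel
    _ ≤ #U * s ^ 2 * ‖dictSum φ d‖ ^ 2 := by
        rw [mul_left_comm]; gcongr

/-- WOMP with weakness parameter `κ` run on `f`; the approximant after `k` steps is `f - r k`. -/
structure IsWOMPRun [DecidableEq Γ] (φ : Γ → H) (κ : ℝ) (f : H) (γseq : ℕ → Γ)
    (S : ℕ → Finset Γ) (r : ℕ → H) : Prop where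
  selected_eq : ∀ k, S k = (range k).image γseq
  sub_residual_mem : ∀ k, f - r k ∈ Submodule.span ℝ (φ '' (S k : Set Γ))
  inner_residual_eq_zero : ∀ k, ∀ v ∈ Submodule.span ℝ (φ '' (S k : Set Γ)), ⟪r k, v⟫ = 0
  weak_greedy : ∀ k γ, κ * |⟪r k, φ γ⟫| ≤ |⟪r k, φ (γseq k)⟫|

namespace IsWOMPRun

variable [DecidableEq Γ] {κ : ℝ} {f : H} {γseq : ℕ → Γ} {S : ℕ → Finset Γ} {r : ℕ → H}

theorem selected_mono (hW : IsWOMPRun φ κ f γseq S r) {k k' : ℕ} (h : k ≤ k') : S k ⊆ S k' := by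
  rw [hW.selected_eq, hW.selected_eq]
  exact image_subset_image (range_subset_range.2 h)

theorem card_selected_le (hW : IsWOMPRun φ κ f γseq S r) (k : ℕ) : #(S k) ≤ k := by
  rw [hW.selected_eq]
  exact card_image_le.trans (card_range k).le

theorem norm_sq_succ_le (hW : IsWOMPRun φ κ f γseq S r) (hnorm : ∀ γ, ‖φ γ‖ = 1) (k : ℕ) :
    ‖r (k + 1)‖ ^ 2 ≤ ‖r k‖ ^ 2 - ⟪r k, φ (γseq k)⟫ ^ 2 := by
  set s := ⟪r k, φ (γseq k)⟫
  have hspan :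
      Submodule.span ℝ (φ '' (S k : Set Γ)) ≤ Submodule.span ℝ (φ '' (S (k + 1) : Set Γ)) :=
    Submodule.span_mono (Set.image_mono (coe_subset.2 (hW.selected_mono k.le_succ)))
  have hγ : φ (γseq k) ∈ Submodule.span ℝ (φ '' (S (k + 1) : Set Γ)) := by
    refine Submodule.subset_span (Set.mem_image_of_mem φ ?_)
    rw [hW.selected_eq]
    exact mem_image_of_mem _ (mem_range.2 k.lt_succ_self)
  have hbest := norm_sq_le_norm_sub_sq_of_orthogonal (hW.sub_residual_mem (k + 1))
    (hW.inner_residual_eq_zero (k + 1))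
    (add_mem (hspan (hW.sub_residual_mem k)) (Submodule.smul_mem _ s hγ))
  rw [show f - (f - r k + s • φ (γseq k)) = r k - s • φ (γseq k) by abel, norm_sub_sq_real,
    real_inner_smul_right, norm_smul, hnorm, Real.norm_eq_abs, mul_one, sq_abs] at hbest
  linarith

theorem sq_mul_norm_sq_sub_le (hW : IsWOMPRun φ κ f γseq S r) (hκ : 0 ≤ κ) {δ : ℝ} (hδ : δ ≤ 1)
    {N : ℕ} (hRIP : RIP φ N δ) {z : Γ →₀ ℝ} {T : Finset Γ} (hzT : z.support ⊆ T) {k : ℕ}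
    (hk : #T + k ≤ N) :
    κ ^ 2 * (1 - δ) * (‖r k‖ ^ 2 - ‖f - dictSum φ z‖ ^ 2)
      ≤ #(T \ S k) * ⟪r k, φ (γseq k)⟫ ^ 2 := by
  obtain ⟨c, hc_mem, hc⟩ :=
    (Finsupp.mem_span_image_iff_linearCombination ℝ).1 (hW.sub_residual_mem k)
  have hcS : c.support ⊆ S k := by exact_mod_cast (Finsupp.mem_supported ℝ c).1 hc_mem
  have hd : dictSum φ (z - c) = r k - (f - dictSum φ z) := by
    rw [dictSum_eq_linearCombination, map_sub, hc, ← dictSum_eq_linearCombination]; abel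
  have hdsupp : (z - c).support ⊆ T ∪ S k :=
    Finsupp.support_sub.trans (union_subset_union hzT hcS)
  have hdcard : #(z - c).support ≤ N :=
    ((card_le_card hdsupp).trans (card_union_le _ _)).trans
      ((Nat.add_le_add_left (hW.card_selected_le k) _).trans hk)
  refine sq_mul_norm_sq_sub_le_of_dictSum_eq hd
    (fun γ hγ =>
      hW.inner_residual_eq_zero k _ (Submodule.subset_span (Set.mem_image_of_mem φ hγ)))
    ?_ hκ (hW.weak_greedy k) hδ (hRIP _ hdcard).1
  intro γ hγ
  simp only [mem_sdiff] at hγ ⊢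
  exact ⟨(mem_union.1 (hdsupp hγ.1)).resolve_right hγ.2, hγ.2⟩

theorem norm_sq_succ_le_sub_max (hW : IsWOMPRun φ κ f γseq S r) (hnorm : ∀ γ, ‖φ γ‖ = 1)
    (hκ : 0 ≤ κ) {δ : ℝ} (hδ : δ ≤ 1) {N : ℕ} (hRIP : RIP φ N δ) {z : Γ →₀ ℝ} {T : Finset Γ}
    (hzT : z.support ⊆ T) {k m : ℕ} (hk : #T + k ≤ N) (hm : 0 < m) (hTk : #(T \ S k) ≤ m) :
    ‖r (k + 1)‖ ^ 2
      ≤ ‖r k‖ ^ 2 - max 0 (κ ^ 2 * (1 - δ) / m * (‖r k‖ ^ 2 - ‖f - dictSum φ z‖ ^ 2)) := by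
  have hmR : (0 : ℝ) < m := Nat.cast_pos.2 hm
  have hgain := (hW.sq_mul_norm_sq_sub_le hκ hδ hRIP hzT hk).trans
    (mul_le_mul_of_nonneg_right (Nat.cast_le.2 hTk) (sq_nonneg _))
  refine (hW.norm_sq_succ_le hnorm k).trans (sub_le_sub_left (max_le (sq_nonneg _) ?_) _)
  rw [div_mul_eq_mul_div, div_le_iff₀ hmR]
  linarith

end IsWOMPRun

end InnerProductSpace

theorem stmt8_WOMP_geometric_decay_general
    {Γ H : Type*} [DecidableEq Γ]
    [NormedAddCommGroup H] [InnerProductSpace ℝ H]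
    (φ : Γ → H) (hnorm : ∀ γ, ‖φ γ‖ = 1)
    (κ : ℝ) (hκ : 0 < κ)
    (f : H) (γseq : ℕ → Γ) (fk : ℕ → H)
    (S : ℕ → Finset Γ) (hS : ∀ k, S k = (Finset.range k).image γseq)
    (r : ℕ → H) (hr : ∀ k, r k = f - fk k)
    (hproj_mem : ∀ k, fk k ∈ Submodule.span ℝ (φ '' (S k : Set Γ)))
    (hproj_orth : ∀ k, ∀ v ∈ Submodule.span ℝ (φ '' (S k : Set Γ)), ⟪r k, v⟫ = 0)
    (hselect : ∀ k, ∀ γ' : Γ, κ * |⟪r k, φ γ'⟫| ≤ |⟪r k, φ (γseq k)⟫|)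
    (A n : ℕ) (δstar : ℝ) (hδ : δstar < 1)
    (hRIP : RIP φ ((A + 1) * n) δstar)
    (z : Γ →₀ ℝ) (T : Finset Γ) (hzT : z.support ⊆ T) (hT : T.card ≤ n)
    (g : H) (hg : g = dictSum φ z)
    (j m L : ℕ) (hTSj : (T \ S j).card ≤ m) (hjmL : j + m * L ≤ A * n) :
    ‖r (j + m * L)‖ ^ 2
      ≤ Real.exp (-(κ ^ 2 * (1 - δstar) * L)) * ‖r j‖ ^ 2 + ‖f - g‖ ^ 2 := by
  have hW : IsWOMPRun φ κ f γseq S r :=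
    ⟨hS, fun k => by rw [hr, sub_sub_cancel]; exact hproj_mem k, hproj_orth, hselect⟩
  subst hg
  rcases Nat.eq_zero_or_pos m with rfl | hm
  · have hj := hW.sq_mul_norm_sq_sub_le hκ.le hδ.le hRIP hzT (k := j)
      (by rw [add_one_mul, add_comm]; omega)
    rw [card_eq_zero.1 (Nat.le_zero.1 hTSj), card_empty, Nat.cast_zero, zero_mul] at hj
    have hc : 0 < κ ^ 2 * (1 - δstar) := by have := sub_pos.2 hδ; positivity
    have hrj : ‖r j‖ ^ 2 ≤ ‖f - dictSum φ z‖ ^ 2 := by nlinarith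
    rw [zero_mul, add_zero]
    nlinarith [Real.exp_pos (-(κ ^ 2 * (1 - δstar) * L)), sq_nonneg ‖r j‖]
  have hstep : ∀ k < m * L, ‖r (j + (k + 1))‖ ^ 2 ≤ ‖r (j + k)‖ ^ 2
      - max 0 (κ ^ 2 * (1 - δstar) / m * (‖r (j + k)‖ ^ 2 - ‖f - dictSum φ z‖ ^ 2)) :=
    fun k hk => hW.norm_sq_succ_le_sub_max (k := j + k) hnorm hκ.le hδ.le hRIP hzT
      (by rw [add_one_mul, add_comm]; omega) hm
      ((card_le_card (sdiff_subset_sdiff subset_rfl (hW.selected_mono (j.le_add_right k)))).trans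
        hTSj)
  have hdecay := le_exp_mul_add_of_forall_lt (a := fun k => ‖r (j + k)‖ ^ 2) (sq_nonneg _)
    (sq_nonneg _) hstep
  have hrate : κ ^ 2 * (1 - δstar) / m * ↑(m * L) = κ ^ 2 * (1 - δstar) * L := by
    have hmR : (m : ℝ) ≠ 0 := Nat.cast_ne_zero.2 hm.ne'
    push_cast; field_simp
  simpa only [hrate, add_zero] using hdecay

/-- Geometric decay of WOMP residuals (Proposition 2.3): under RIP((A+1)n) with
constant `δ* < 1`, if `g = Φz` with `z` supported on `T`, `#T ≤ n`,
`#(T \ S_j) ≤ m` and `j + mL ≤ An`, then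
`‖r_{j+mL}‖² ≤ e^{−κ²(1−δ*)L} ‖r_j‖² + ‖f − g‖²`. -/
theorem stmt8_WOMP_geometric_decay
    {Γ H : Type*} [Countable Γ] [DecidableEq Γ]
    [NormedAddCommGroup H] [InnerProductSpace ℝ H] [CompleteSpace H]
    (φ : Γ → H) (hnorm : ∀ γ, ‖φ γ‖ = 1)
    (κ : ℝ) (hκ : 0 < κ) (hκ1 : κ ≤ 1)
    (f : H) (γseq : ℕ → Γ) (fk : ℕ → H)
    (S : ℕ → Finset Γ) (hS : ∀ k, S k = (Finset.range k).image γseq)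
    (r : ℕ → H) (hr : ∀ k, r k = f - fk k)
    (hproj_mem : ∀ k, fk k ∈ Submodule.span ℝ (φ '' (S k : Set Γ)))
    (hproj_orth : ∀ k, ∀ v ∈ Submodule.span ℝ (φ '' (S k : Set Γ)), ⟪r k, v⟫ = 0)
    (hselect : ∀ k, ∀ γ' : Γ, κ * |⟪r k, φ γ'⟫| ≤ |⟪r k, φ (γseq k)⟫|)
    (A n : ℕ) (δstar : ℝ) (hδ : δstar < 1)
    (hRIP : RIP φ ((A + 1) * n) δstar)
    (z : Γ →₀ ℝ) (T : Finset Γ) (hzT : z.support ⊆ T) (hT : T.card ≤ n)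
    (g : H) (hg : g = dictSum φ z)
    (j m L : ℕ) (hTSj : (T \ S j).card ≤ m) (hjmL : j + m * L ≤ A * n) :
    ‖r (j + m * L)‖ ^ 2
      ≤ Real.exp (-(κ ^ 2 * (1 - δstar) * L)) * ‖r j‖ ^ 2 + ‖f - g‖ ^ 2 :=
  stmt8_WOMP_geometric_decay_general φ hnorm κ hκ f γseq fk S hS r hr hproj_mem hproj_orth hselect A
    n δstar hδ hRIP z T hzT hT g hg j m L hTSj hjmL
end

section
/- Hard-thresholding stability in ℓ²: let c, d be finitely supported sequences with #supp(c) ≤ n, and let T be a set of n indices corresponding to n largest (in absolute value) entries of d. Then ‖c − d_T‖_{ℓ²} ≤ 3 ‖c − d‖_{ℓ²}, where d_T agrees with d on T and is zero elsewhere. -/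
open scoped BigOperators

/-!
With `S = supp c`, the error `c - d_T` equals `c - d` on `T` and `c` on `S \ T`, and vanishes
elsewhere. On `S \ T` write `c = (c - d) + d`. Since `#(S \ T) ≤ #(T \ S)` and each entry of `d`
off `T` is dominated by each entry on `T`, `∑_{S \ T} d² ≤ ∑_{T \ S} d²`, and on `T \ S` we have
`d = -(c - d)`. Altogether `‖c - d_T‖² ≤ 5 ‖c - d‖²`.
-/

open Finset

theorem sum_le_sum_of_card_le_of_forall_le {ι M : Type*} [AddCommMonoid M] [LinearOrder M]
    [IsOrderedAddMonoid M] {f : ι → M} {s t : Finset ι} (hst : #s ≤ #t)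
    (hf : ∀ j ∈ t, 0 ≤ f j) (hle : ∀ i ∈ s, ∀ j ∈ t, f i ≤ f j) :
    ∑ i ∈ s, f i ≤ ∑ j ∈ t, f j := by
  rcases t.eq_empty_or_nonempty with rfl | ht
  · simp [card_eq_zero.mp (Nat.le_zero.mp hst)]
  obtain ⟨j₀, hj₀, hmin⟩ := t.exists_min_image f ht
  calc ∑ i ∈ s, f i ≤ #s • f j₀ := sum_le_card_nsmul s f _ fun i hi => hle i hi j₀ hj₀
    _ ≤ #t • f j₀ := nsmul_le_nsmul_left (hf j₀ hj₀) hst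
    _ ≤ ∑ j ∈ t, f j := card_nsmul_le_sum t f _ hmin

section HardThresholding

variable {Γ : Type*}

theorem sum_sq_sdiff_le_sum_sq_sdiff [DecidableEq Γ] {S T : Finset Γ} (d : Γ → ℝ)
    (hcard : #S ≤ #T) (hT : ∀ γ ∈ T, ∀ γ' ∉ T, |d γ'| ≤ |d γ|) :
    ∑ γ ∈ S \ T, d γ ^ 2 ≤ ∑ γ ∈ T \ S, d γ ^ 2 :=
  sum_le_sum_of_card_le_of_forall_le (card_sdiff_le_card_sdiff_iff.mpr hcard)
    (fun _ _ => sq_nonneg _)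
    fun _ hγ' _ hγ => sq_le_sq.mpr (hT _ (mem_sdiff.1 hγ).1 _ (mem_sdiff.1 hγ').2)

theorem l2norm_sq (g : Γ →₀ ℝ) : l2norm g ^ 2 = ∑ γ ∈ g.support, g γ ^ 2 :=
  Real.sq_sqrt (sum_nonneg fun _ _ => sq_nonneg _)

theorem l2norm_sq_eq_sum_of_support_subset {g : Γ →₀ ℝ} {s : Finset Γ} (h : g.support ⊆ s) :
    l2norm g ^ 2 = ∑ γ ∈ s, g γ ^ 2 := by
  rw [l2norm_sq]
  exact sum_subset h fun γ _ hγ => by simp [Finsupp.notMem_support_iff.mp hγ]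

theorem sum_sq_le_l2norm_sq [DecidableEq Γ] (g : Γ →₀ ℝ) (s : Finset Γ) :
    ∑ γ ∈ s, g γ ^ 2 ≤ l2norm g ^ 2 := by
  rw [l2norm_sq_eq_sum_of_support_subset (subset_union_right (s₁ := s))]
  exact sum_le_sum_of_subset_of_nonneg subset_union_left fun _ _ _ => sq_nonneg _

theorem l2norm_sub_filter_sq [DecidableEq Γ] (c d : Γ →₀ ℝ) (T : Finset Γ) :
    l2norm (c - d.filter (· ∈ T)) ^ 2 =
      ∑ γ ∈ T, (c - d) γ ^ 2 + ∑ γ ∈ c.support \ T, c γ ^ 2 := by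
  have hsupp : (c - d.filter (· ∈ T)).support ⊆ T ∪ c.support \ T := by
    intro γ hγ
    by_cases hγT : γ ∈ T <;> simp_all
  rw [l2norm_sq_eq_sum_of_support_subset hsupp, sum_union disjoint_sdiff]
  congr 1 <;> refine sum_congr rfl fun γ hγ => ?_
  · simp [hγ]
  · simp [(mem_sdiff.1 hγ).2]

end HardThresholding

/-- Hard-thresholding stability in ℓ²: if `#supp(c) ≤ n` and `T` is a set of `n`
indices of the `n` largest (in absolute value) entries of `d`, then
`‖c − d_T‖_{ℓ²} ≤ 3‖c − d‖_{ℓ²}`, where `d_T` agrees with `d` on `T` and vanishes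
elsewhere. -/
theorem stmt14_hard_thresholding
    {Γ : Type*} [DecidableEq Γ]
    (n : ℕ) (c d : Γ →₀ ℝ) (hc : c.support.card ≤ n)
    (T : Finset Γ) (hTcard : T.card = n)
    (hTlargest : ∀ γ ∈ T, ∀ γ' ∉ T, |d γ'| ≤ |d γ|) :
    l2norm (c - d.filter (· ∈ T)) ≤ 3 * l2norm (c - d) := by
  have hc_le : ∑ γ ∈ c.support \ T, c γ ^ 2 ≤
      2 * (∑ γ ∈ c.support \ T, (c - d) γ ^ 2 + ∑ γ ∈ c.support \ T, d γ ^ 2) := by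
    rw [← sum_add_distrib, mul_sum]
    exact sum_le_sum fun γ _ => by simpa using add_sq_le (a := (c - d) γ) (b := d γ)
  have hd_le : ∑ γ ∈ c.support \ T, d γ ^ 2 ≤ ∑ γ ∈ T \ c.support, (c - d) γ ^ 2 :=
    (sum_sq_sdiff_le_sum_sq_sdiff d (hc.trans hTcard.ge) hTlargest).trans_eq <|
      sum_congr rfl fun γ hγ => by simp [Finsupp.notMem_support_iff.mp (mem_sdiff.1 hγ).2]
  have hsq : l2norm (c - d.filter (· ∈ T)) ^ 2 ≤ (3 * l2norm (c - d)) ^ 2 := by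
    rw [l2norm_sub_filter_sq, mul_pow, show (3 : ℝ) ^ 2 = 9 by norm_num]
    linarith [sum_sq_le_l2norm_sq (c - d) T, sum_sq_le_l2norm_sq (c - d) (c.support \ T),
      sum_sq_le_l2norm_sq (c - d) (T \ c.support), sq_nonneg (l2norm (c - d))]
  exact le_of_sq_le_sq hsq (mul_nonneg zero_le_three (Real.sqrt_nonneg _))
end
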